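/- Let Λ be the Kronecker algebra over an algebraically closed field k and let B = P(I) for an infinite subset I ⊂ k. Then for every λ ∈ k ∪ {∞} there is a nonzero homomorphism from B to the simple regular module S_λ (where S_∞ is the representation k ⇉ k with maps 0 and identity). -/

import Mathlib

universe u

variable (k : Type u) [Field k]

/-- A representation of the Kronecker quiver `0 ⇉ 1`: two vector spaces and two
linear maps. -/
structure KronRep where
  V : Type u
  W : Type u
  [addV : AddCommGroup V]
  [addW : AddCommGroup W]
  [modV : Module k V]
  [modW : Module k W]
  a : V →ₗ[k] W
  b : V →ₗ[k] W

attribute [instance] KronRep.addV KronRep.addW KronRep.modV KronRep.modW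

variable {k}

/-- A morphism of Kronecker representations. -/
@[ext]
structure KronHom (M N : KronRep k) where
  φ : M.V →ₗ[k] N.V
  ψ : M.W →ₗ[k] N.W
  comm_a : N.a.comp φ = ψ.comp M.a
  comm_b : N.b.comp φ = ψ.comp M.b

/-- The zero morphism. -/
def KronHom.zero (M N : KronRep k) : KronHom M N :=
  ⟨0, 0, by simp, by simp⟩

/-- The identity morphism. -/
def KronHom.id (M : KronRep k) : KronHom M M :=
  ⟨LinearMap.id, LinearMap.id, by simp, by simp⟩

/-- `M` is the zero representation. -/
def KronRep.IsZeroRep (M : KronRep k) : Prop :=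
  Subsingleton M.V ∧ Subsingleton M.W

/-- `M` is indecomposable: it is nonzero and its endomorphism ring has no nontrivial
idempotents. -/
def KronRep.Indecomposable (M : KronRep k) : Prop :=
  ¬ M.IsZeroRep ∧ ∀ e : KronHom M M,
    e.φ.comp e.φ = e.φ → e.ψ.comp e.ψ = e.ψ → e = KronHom.zero M M ∨ e = KronHom.id M

/-- For Kronecker representations, the finite-dimensional indecomposable preprojective
modules are exactly the indecomposables of dimension vector `(n, n+1)`. -/
def KronRep.IsPreprojective (M : KronRep k) : Prop :=
  M.Indecomposable ∧ ∃ n : ℕ, Module.finrank k M.V = n ∧ Module.finrank k M.W = n + 1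

variable (k)

/-- The subspace `V(I) ⊆ k(T)` spanned by the elements `1/(T - λ)`, `λ ∈ I`. -/
noncomputable def VI (I : Set k) : Submodule k (RatFunc k) :=
  Submodule.span k ((fun l : k => (RatFunc.X - RatFunc.C l)⁻¹) '' I)

/-- The subspace `V(I) + k·1 ⊆ k(T)`. -/
noncomputable def WI (I : Set k) : Submodule k (RatFunc k) :=
  VI k I ⊔ Submodule.span k {1}

theorem mulX_mem (I : Set k) : ∀ v : RatFunc k, v ∈ VI k I →
    RatFunc.X * v ∈ WI k I := by
  intro v hv
  induction hv using Submodule.span_induction with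
  | mem x hx =>
      obtain ⟨l, hl, rfl⟩ := hx
      have hne : (RatFunc.X - RatFunc.C l : RatFunc k) ≠ 0 := by
        have h1 : (RatFunc.X - RatFunc.C l : RatFunc k)
            = algebraMap (Polynomial k) (RatFunc k) (Polynomial.X - Polynomial.C l) := by
          simp [RatFunc.algebraMap_X, RatFunc.algebraMap_C]
        rw [h1]
        exact RatFunc.algebraMap_ne_zero (Polynomial.X_sub_C_ne_zero l)
      have key : RatFunc.X * (RatFunc.X - RatFunc.C l)⁻¹
          = l • (RatFunc.X - RatFunc.C l)⁻¹ + 1 := by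
        rw [Algebra.smul_def]
        field_simp
        rw [RatFunc.algebraMap_eq_C]
        ring
      rw [key]
      refine add_mem ?_ ?_
      · exact Submodule.mem_sup_left (Submodule.smul_mem _ _
          (Submodule.subset_span ⟨l, hl, rfl⟩))
      · exact Submodule.mem_sup_right (Submodule.subset_span rfl)
  | zero => simpa using (WI k I).zero_mem
  | add x y hx hy ihx ihy => simpa [mul_add] using add_mem ihx ihy
  | smul c x hx ih => simpa [Algebra.mul_smul_comm] using (WI k I).smul_mem c ih

/-- Ringel's representation `P(I)`: the subrepresentation `(V(I) ⇉ V(I) + k·1)` of the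
generic representation `(k(T) ⇉ k(T))`, whose maps are the inclusion and
multiplication by `T`. -/
noncomputable def Prep (I : Set k) : KronRep k where
  V := VI k I
  W := WI k I
  a := Submodule.inclusion le_sup_left
  b := LinearMap.codRestrict (WI k I)
    ((LinearMap.mulLeft k (RatFunc.X : RatFunc k)).comp (VI k I).subtype)
    (fun v => mulX_mem k I v v.2)

/-- The simple regular representation `S_λ = (k ⇉ k)` with maps `id` and `λ·id`. -/
noncomputable def Slam (l : k) : KronRep k where
  V := k
  W := k
  a := LinearMap.id
  b := l • LinearMap.id

/-- The simple regular representation `S_∞ = (k ⇉ k)` with maps `0` and `id`. -/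
noncomputable def Sinf : KronRep k where
  V := k
  W := k
  a := 0
  b := LinearMap.id

/-!
A homomorphism from a Kronecker representation `(V ⇉ W)` to `S_λ` is a linear form `ψ` on `W`
with `ψ ∘ b = λ • ψ ∘ a`, and one to `S_∞` is a linear form on `W` killing the image of `a`.
For `P(I)` and `λ ∉ I`, every element of `W(I)` is regular at `λ` and evaluation at `λ` is such a
form, nonzero on `1`. For `λ ∈ I`, the residue `w ↦ ((T - λ) w)(λ)` is one, nonzero on
`1/(T - λ)`. For `∞`, the elements of `V(I)` vanish at infinity, so `1 ∉ V(I)` and some linear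
form kills `V(I)` but not `1`.
-/

section

open RatFunc

variable {k}

namespace KronRep

variable {M : KronRep k}

noncomputable def homToSlam (l : k) (ψ : M.W →ₗ[k] k) (h : ψ ∘ₗ M.b = l • ψ ∘ₗ M.a) :
    KronHom M (Slam k l) where
  φ := ψ ∘ₗ M.a
  ψ := ψ
  comm_a := LinearMap.id_comp _
  comm_b := LinearMap.ext fun v => (LinearMap.congr_fun h v).symm

noncomputable def homToSinf (ψ : M.W →ₗ[k] k) (h : ψ ∘ₗ M.a = 0) : KronHom M (Sinf k) where
  φ := ψ ∘ₗ M.b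
  ψ := ψ
  comm_a := LinearMap.ext fun v => (LinearMap.congr_fun h v).symm
  comm_b := LinearMap.id_comp _

theorem _root_.KronHom.ne_zero_of_ψ_ne_zero {N : KronRep k} {f : KronHom M N} (hf : f.ψ ≠ 0) :
    f ≠ KronHom.zero M N := by
  rintro rfl
  exact hf rfl

theorem exists_hom_Slam_ne_zero {l : k} {ψ : M.W →ₗ[k] k} (h : ψ ∘ₗ M.b = l • ψ ∘ₗ M.a)
    {w : M.W} (hw : ψ w ≠ 0) : ∃ f : KronHom M (Slam k l), f ≠ KronHom.zero _ _ :=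
  ⟨homToSlam l ψ h, KronHom.ne_zero_of_ψ_ne_zero fun h0 => hw (LinearMap.congr_fun h0 w)⟩

theorem exists_hom_Sinf_ne_zero {x : M.W} (hx : x ∉ LinearMap.range M.a) :
    ∃ f : KronHom M (Sinf k), f ≠ KronHom.zero _ _ := by
  obtain ⟨ψ, hψx, hψ⟩ := Submodule.exists_dual_map_eq_bot_of_notMem hx inferInstance
  refine ⟨homToSinf ψ ?_, KronHom.ne_zero_of_ψ_ne_zero fun h => hψx ?_⟩
  · rwa [← LinearMap.range_eq_bot, LinearMap.range_comp]
  · exact LinearMap.congr_fun h x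

end KronRep

namespace RatFunc

noncomputable def regularAt (l : k) : Subalgebra k (RatFunc k) where
  carrier := {w | w.denom.eval l ≠ 0}
  mul_mem' {x y} hx hy h := mul_ne_zero hx hy <| by
    simpa using Polynomial.eval_eq_zero_of_dvd_of_eval_eq_zero (denom_mul_dvd x y) h
  add_mem' {x y} hx hy h := mul_ne_zero hx hy <| by
    simpa using Polynomial.eval_eq_zero_of_dvd_of_eval_eq_zero (denom_add_dvd x y) h
  algebraMap_mem' c := by simp [algebraMap_eq_C, denom_C]

theorem mem_regularAt {l : k} {w : RatFunc k} : w ∈ regularAt l ↔ w.denom.eval l ≠ 0 :=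
  Iff.rfl

theorem algebraMap_mem_regularAt (l : k) (p : Polynomial k) :
    algebraMap (Polynomial k) (RatFunc k) p ∈ regularAt l := by
  simp [mem_regularAt, denom_algebraMap]

theorem X_mem_regularAt (l : k) : (X : RatFunc k) ∈ regularAt l := by
  simpa using algebraMap_mem_regularAt l Polynomial.X

theorem X_sub_C_eq_algebraMap (l : k) :
    (X - C l : RatFunc k) =
      algebraMap (Polynomial k) (RatFunc k) (Polynomial.X - Polynomial.C l) := by
  simp [algebraMap_X, algebraMap_C]

theorem X_sub_C_ne_zero (l : k) : (X - C l : RatFunc k) ≠ 0 := by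
  rw [X_sub_C_eq_algebraMap]
  exact algebraMap_ne_zero (Polynomial.X_sub_C_ne_zero l)

theorem X_sub_C_mem_regularAt (l m : k) : (X - C m : RatFunc k) ∈ regularAt l := by
  rw [X_sub_C_eq_algebraMap]
  exact algebraMap_mem_regularAt l _

theorem inv_X_sub_C_mem_regularAt {l m : k} (h : m ≠ l) : (X - C m)⁻¹ ∈ regularAt l := by
  intro h0
  have := Polynomial.eval_eq_zero_of_dvd_of_eval_eq_zero (denom_inv_dvd (X_sub_C_ne_zero m)) h0
  rw [X_sub_C_eq_algebraMap, num_algebraMap] at this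
  exact h (sub_eq_zero.1 (by simpa using this)).symm

noncomputable def evalRegular (l : k) : regularAt l →ₐ[k] k where
  toFun w := eval (RingHom.id k) l w
  map_one' := eval_one _ _
  map_mul' x y := eval_mul _ _ x.2 y.2
  map_zero' := eval_zero _ _
  map_add' x y := eval_add _ _ x.2 y.2
  commutes' c := by simp [algebraMap_eq_C]

end RatFunc

theorem VI_le_WI {I : Set k} : VI k I ≤ WI k I :=
  le_sup_left

theorem one_mem_WI (I : Set k) : (1 : RatFunc k) ∈ WI k I :=
  Submodule.mem_sup_right (Submodule.mem_span_singleton_self 1)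

theorem WI_le_iff {I : Set k} {p : Submodule k (RatFunc k)} :
    WI k I ≤ p ↔ (∀ m ∈ I, (X - C m)⁻¹ ∈ p) ∧ (1 : RatFunc k) ∈ p := by
  rw [WI, VI, sup_le_iff, Submodule.span_le, Set.image_subset_iff,
    Submodule.span_singleton_le_iff_mem]
  rfl

theorem WI_le_regularAt {I : Set k} {l : k} (hl : l ∉ I) :
    WI k I ≤ Subalgebra.toSubmodule (regularAt l) :=
  WI_le_iff.2 ⟨fun _ hm => inv_X_sub_C_mem_regularAt (ne_of_mem_of_not_mem hm hl),
    (regularAt l).one_mem⟩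

theorem X_sub_C_mul_mem_regularAt_of_mem_WI (l : k) {I : Set k} {w : RatFunc k}
    (hw : w ∈ WI k I) : (X - C l) * w ∈ regularAt l := by
  suffices WI k I ≤ (Subalgebra.toSubmodule (regularAt l)).comap
      (LinearMap.mulLeft k (X - C l)) from this hw
  refine WI_le_iff.2 ⟨fun m _ => ?_, ?_⟩
  · show (X - C l) * (X - C m)⁻¹ ∈ regularAt l
    rcases eq_or_ne m l with rfl | h
    · rw [mul_inv_cancel₀ (X_sub_C_ne_zero m)]
      exact one_mem _
    · exact mul_mem (X_sub_C_mem_regularAt l l) (inv_X_sub_C_mem_regularAt h)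
  · show (X - C l) * 1 ∈ regularAt l
    rw [mul_one]
    exact X_sub_C_mem_regularAt l l

noncomputable def evalWI {I : Set k} {l : k} (hl : l ∉ I) : WI k I →ₗ[k] k :=
  (evalRegular l).toLinearMap ∘ₗ Submodule.inclusion (WI_le_regularAt hl)

noncomputable def residueWI (I : Set k) (l : k) : WI k I →ₗ[k] k :=
  (evalRegular l).toLinearMap ∘ₗ (LinearMap.mulLeft k (X - C l)).restrict
    (q := Subalgebra.toSubmodule (regularAt l))
    fun _ hw => X_sub_C_mul_mem_regularAt_of_mem_WI l hw

theorem evalWI_comp_b {I : Set k} {l : k} (hl : l ∉ I) :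
    evalWI hl ∘ₗ (Prep k I).b = l • evalWI hl ∘ₗ (Prep k I).a := by
  refine LinearMap.ext fun (v : VI k I) => ?_
  show eval (RingHom.id k) l (X * v.1) = l * eval (RingHom.id k) l v.1
  rw [eval_mul _ _ (X_mem_regularAt l) (WI_le_regularAt hl (VI_le_WI v.2)), eval_X]

theorem residueWI_comp_b (I : Set k) (l : k) :
    residueWI I l ∘ₗ (Prep k I).b = l • residueWI I l ∘ₗ (Prep k I).a := by
  refine LinearMap.ext fun (v : VI k I) => ?_
  show eval (RingHom.id k) l ((X - C l) * (X * v.1)) =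
    l * eval (RingHom.id k) l ((X - C l) * v.1)
  rw [mul_left_comm, eval_mul _ _ (X_mem_regularAt l)
    (X_sub_C_mul_mem_regularAt_of_mem_WI l (VI_le_WI v.2)), eval_X]

theorem evalWI_one {I : Set k} {l : k} (hl : l ∉ I) : evalWI hl ⟨1, one_mem_WI I⟩ = 1 :=
  eval_one _ _

theorem residueWI_inv_X_sub_C {I : Set k} {l : k} (hl : l ∈ I) :
    residueWI I l ⟨(X - C l)⁻¹, VI_le_WI (Submodule.subset_span ⟨l, hl, rfl⟩)⟩ = 1 := by
  show eval (RingHom.id k) l ((X - C l) * (X - C l)⁻¹) = 1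
  rw [mul_inv_cancel₀ (X_sub_C_ne_zero l), eval_one]

theorem inftyValuation_lt_one_of_mem_VI [DecidableEq (RatFunc k)] {I : Set k} {w : RatFunc k}
    (hw : w ∈ VI k I) : inftyValuation k w < 1 := by
  induction hw using Submodule.span_induction with
  | mem x hx =>
    obtain ⟨m, -, rfl⟩ := hx
    rw [map_inv₀, inftyValuation_apply, X_sub_C_eq_algebraMap,
      inftyValuation.polynomial _ (Polynomial.X_sub_C_ne_zero m), Polynomial.natDegree_X_sub_C,
      ← WithZero.exp_neg, ← WithZero.exp_zero, WithZero.exp_lt_exp]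
    norm_num
  | zero => simp
  | add x y _ _ hx hy => exact (Valuation.map_add _ x y).trans_lt (max_lt hx hy)
  | smul c x _ hx =>
    rw [Algebra.smul_def, map_mul]
    exact (mul_le_of_le_one_left' (Valuation.IsTrivialOn.valuation_algebraMap_le_one _ c)).trans_lt
      hx

theorem one_notMem_VI (I : Set k) : (1 : RatFunc k) ∉ VI k I := by
  classical
  exact fun h => (inftyValuation_lt_one_of_mem_VI h).ne (map_one _)

theorem one_notMem_range_Prep_a (I : Set k) :
    (⟨1, one_mem_WI I⟩ : WI k I) ∉ LinearMap.range (Prep k I).a := by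
  rintro ⟨v, hv⟩
  have hv1 : v.1 = 1 := congrArg Subtype.val hv
  exact one_notMem_VI I (hv1 ▸ v.2)

end

theorem exists_nonzero_hom_Prep_to_simple_regular
    (I : Set k) :
    (∀ l : k, ∃ f : KronHom (Prep k I) (Slam k l), f ≠ KronHom.zero _ _) ∧
    (∃ f : KronHom (Prep k I) (Sinf k), f ≠ KronHom.zero _ _) := by
  refine ⟨fun l => ?_, KronRep.exists_hom_Sinf_ne_zero (one_notMem_range_Prep_a I)⟩
  by_cases hl : l ∈ I
  · exact KronRep.exists_hom_Slam_ne_zero (residueWI_comp_b I l)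
      (residueWI_inv_X_sub_C hl ▸ one_ne_zero)
  · exact KronRep.exists_hom_Slam_ne_zero (evalWI_comp_b hl) (evalWI_one hl ▸ one_ne_zero)
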